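/- With Γ₁, Γ₂, Δ, M, 𝓔 as above, the map q : (𝓔 ⊗ M)_Δ → I_ΔM induced by (g, c−1) ⊗ m ↦ c^{-1}·m − m is surjective, and its kernel is isomorphic to the group homology H_1(Γ₁, M) (with Γ₁ acting on M via π); that is, there is an exact sequence of abelian groups 0 → H_1(Γ₁, M) → (𝓔 ⊗ M)_Δ → I_ΔM → 0, functorial in M. -/

import Mathlib

/-!
STATEMENT 9.  The exact sequence 0 → H_1(Γ₁, M) → (𝓔 ⊗ M)_Δ → I_ΔM → 0:
the map q : (𝓔⊗M)_Δ → M induced by (g, c−1) ⊗ m ↦ c⁻¹·m − m has range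
exactly I_ΔM, and its kernel is the isomorphic image of the group homology
H_1(Γ₁, M) (Γ₁ acting on M through π) under an injective homomorphism.
-/

open scoped TensorProduct

section EModule

variable {Γ₁ Δ : Type} [Group Γ₁] [Group Δ]

/-- The augmentation map `ℤ[Δ] → ℤ` (sum of coefficients), with `ℤ[Δ]`
realized as `Δ →₀ ℤ`. -/
noncomputable def augmentation (Δ : Type) : (Δ →₀ ℤ) →+ ℤ :=
  Finsupp.liftAddHom fun _ => AddMonoidHom.id ℤ

/-- The augmentation ideal `I_Δ ⊆ ℤ[Δ]`, as an additive subgroup. -/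
noncomputable def augIdeal (Δ : Type) : AddSubgroup (Δ →₀ ℤ) := (augmentation Δ).ker

/-- The element `c − 1` of `I_Δ`. -/
noncomputable def aidElt [Group Δ] (c : Δ) : ↥(augIdeal Δ) :=
  ⟨Finsupp.single c 1 - Finsupp.single 1 1, by
    simp [augIdeal, AddMonoidHom.mem_ker, map_sub, augmentation,
      Finsupp.liftAddHom_apply_single]⟩

/-- The element `a − b` of `I_Δ`. -/
noncomputable def aidElt2 [Group Δ] (a b : Δ) : ↥(augIdeal Δ) :=
  ⟨Finsupp.single a 1 - Finsupp.single b 1, by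
    simp [augIdeal, AddMonoidHom.mem_ker, map_sub, augmentation,
      Finsupp.liftAddHom_apply_single]⟩

/-- The underlying abelian group `Γ₂^{ab} ⊕ I_Δ` of the ℤ[Δ]-module 𝓔
(with `Γ₂ = ker π` and `Γ₂^{ab}` its abelianization, written additively). -/
abbrev EMod (π : Γ₁ →* Δ) : Type :=
  Additive (Abelianization ↥π.ker) × ↥(augIdeal Δ)

/-- The Δ-action `d·[k] = [σ(d) k σ(d)⁻¹]` on `Γ₂^{ab}` (conjugation uses
normality of `Γ₂ = ker π`). -/
noncomputable def conjAb (π : Γ₁ →* Δ) (σ : Δ → Γ₁) (d : Δ) :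
    Abelianization ↥π.ker →* Abelianization ↥π.ker :=
  Abelianization.map (MulAut.conjNormal (σ d)).toMonoidHom

/-- The 2-cocycle `κ(d,c) = [σ(d)σ(c)σ(dc)⁻¹] ∈ Γ₂^{ab}`. -/
noncomputable def kappaE (π : Γ₁ →* Δ) (σ : Δ → Γ₁) (hσ : ∀ c, π (σ c) = c)
    (d c : Δ) : Abelianization ↥π.ker :=
  Abelianization.of ⟨σ d * σ c * (σ (d * c))⁻¹, by
    have : π (σ d * σ c * (σ (d * c))⁻¹) = 1 := by
      rw [map_mul, map_mul, map_inv, hσ, hσ, hσ, mul_inv_cancel]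
    simpa [MonoidHom.mem_ker] using this⟩

/-- The defining formula of the Δ-action on `𝓔 = Γ₂^{ab} ⊕ I_Δ`:
`d ∗ (g, c−1) = (d·g + κ(d,c), dc − d)`, extended ℤ-linearly.  (The elements
`(g, c−1)` generate `𝓔`, so this determines the action.) -/
def EActionFormula (π : Γ₁ →* Δ) (σ : Δ → Γ₁) (hσ : ∀ c, π (σ c) = c)
    [DistribMulAction Δ (EMod π)] : Prop :=
  ∀ (d : Δ) (g : Abelianization ↥π.ker) (c : Δ),
    d • ((Additive.ofMul g, aidElt c) : EMod π) =
      (Additive.ofMul (conjAb π σ d g * kappaE π σ hσ d c), aidElt2 (d * c) d)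

variable (M : Type) [AddCommGroup M] [DistribMulAction Δ M]

/-- `T = 𝓔 ⊗ M`. -/
abbrev TMod (π : Γ₁ →* Δ) : Type := (EMod π) ⊗[ℤ] M

/-- The diagonal action of `d ∈ Δ` on `𝓔 ⊗ M`. -/
noncomputable def diagT (π : Γ₁ →* Δ) [DistribMulAction Δ (EMod π)] (d : Δ) :
    TMod M π →ₗ[ℤ] TMod M π :=
  TensorProduct.map ((DistribMulAction.toAddMonoidHom (EMod π) d).toIntLinearMap)
    ((DistribMulAction.toAddMonoidHom M d).toIntLinearMap)

/-- The subgroup of `𝓔 ⊗ M` generated by the elements `d•t − t`. -/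
noncomputable def coinvKerT (π : Γ₁ →* Δ) [DistribMulAction Δ (EMod π)] :
    AddSubgroup (TMod M π) :=
  AddSubgroup.closure {x | ∃ (d : Δ) (t : TMod M π), x = diagT M π d t - t}

/-- The Δ-coinvariants `(𝓔 ⊗ M)_Δ`. -/
abbrev CoinvT (π : Γ₁ →* Δ) [DistribMulAction Δ (EMod π)] : Type :=
  TMod M π ⧸ coinvKerT M π

/-- 1-cocycles `Z¹(Γ₁, Hom(M,V))`, where `Γ₁` acts on `Hom(M,V)` by
`(γ·f)(m) = f(π(γ)⁻¹·m)`. -/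
noncomputable def ZOneM (π : Γ₁ →* Δ) (V : Type) [AddCommGroup V] :
    AddSubgroup (Γ₁ → (M →+ V)) where
  carrier := {Φ | ∀ (g h : Γ₁) (m : M), Φ (g * h) m = Φ g m + Φ h ((π g)⁻¹ • m)}
  zero_mem' := by intro g h m; simp
  add_mem' := by
    intro Φ Ψ hΦ hΨ g h m
    simp only [Pi.add_apply, AddMonoidHom.add_apply, hΦ g h m, hΨ g h m]
    abel
  neg_mem' := by
    intro Φ hΦ g h m
    simp only [Pi.neg_apply, AddMonoidHom.neg_apply, hΦ g h m]
    abel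

/-- The subgroup `I_Δ·M ⊆ M` generated by the elements `c•m − m`. -/
noncomputable def idealSMulM : AddSubgroup M :=
  AddSubgroup.closure {x : M | ∃ (c : Δ) (m : M), x = c • m - m}

/-- First differential `(Γ₁ →₀ M) → M`, `[g]⊗m ↦ π(g)•m − m`, of the complex
computing `H_1(Γ₁, M)` (with `Γ₁` acting on `M` through `π`). -/
noncomputable def dOne (π : Γ₁ →* Δ) : (Γ₁ →₀ M) →+ M :=
  Finsupp.liftAddHom fun g =>
    DistribMulAction.toAddMonoidHom M (π g) - AddMonoidHom.id M

/-- Second differential `(Γ₁×Γ₁ →₀ M) → (Γ₁ →₀ M)`,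
`[g|h]⊗m ↦ [h]⊗m − [gh]⊗m + [g]⊗(π(h)•m)`. -/
noncomputable def dTwo (π : Γ₁ →* Δ) : ((Γ₁ × Γ₁) →₀ M) →+ (Γ₁ →₀ M) :=
  Finsupp.liftAddHom fun p =>
    (Finsupp.singleAddHom p.2 - Finsupp.singleAddHom (p.1 * p.2)
      + (Finsupp.singleAddHom p.1).comp (DistribMulAction.toAddMonoidHom M (π p.2)) :
        M →+ (Γ₁ →₀ M))

/-- The group homology `H_1(Γ₁, M)` (action of `Γ₁` on `M` through `π`). -/
abbrev HOne (π : Γ₁ →* Δ) : Type :=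
  ↥(dOne M π).ker ⧸ ((dTwo M π).range.addSubgroupOf (dOne M π).ker)

end EModule

/-!
The map `e : Γ₁ → 𝓔`, `g ↦ ([g σ(πg)⁻¹], πg − 1)`, is a crossed homomorphism, and through it
every 1-cocycle `Φ : Γ₁ → Hom(M, V)` induces a Δ-invariant map `𝓔 ⊗ M → V` sending `e(g) ⊗ m` to
`Φ(g)(m)`. Sending `[g] ⊗ m` to the class of `e(g⁻¹) ⊗ m` kills the boundaries, so it gives a map
`C₁(Γ₁, M)/B₁ → (𝓔 ⊗ M)_Δ`; the cocycle `g ↦ (m ↦ [g⁻¹] ⊗ m)` with values in `C₁/B₁` produces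
its inverse. Under this isomorphism `q` becomes the differential `d₁`, hence
`ker q ≅ Z₁/B₁ = H₁(Γ₁, M)`, while the range of `q` is read off on the generators
`(g, c − 1) ⊗ m` of `𝓔 ⊗ M`.
-/

section Generators

variable {Γ₁ Δ : Type} [Group Γ₁] [Group Δ]

lemma aidElt_one : aidElt (1 : Δ) = 0 := Subtype.ext (sub_self _)

lemma closure_range_aidElt : AddSubgroup.closure (Set.range (aidElt (Δ := Δ))) = ⊤ := by
  let L : (Δ →₀ ℤ) →+ augIdeal Δ := Finsupp.liftAddHom fun c => zmultiplesHom _ (aidElt c)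
  have hL : (augIdeal Δ).subtype.comp L =
      AddMonoidHom.id _ - (zmultiplesHom _ (Finsupp.single 1 1)).comp (augmentation Δ) :=
    Finsupp.addHom_ext fun c n => by
      simp [L, aidElt, augmentation, smul_sub, Finsupp.smul_single]
  refine eq_top_iff.2 fun u _ => ?_
  have hu : L (u : Δ →₀ ℤ) = u := Subtype.ext <| by
    simpa [show augmentation Δ (u : Δ →₀ ℤ) = 0 from u.2] using
      DFunLike.congr_fun hL (u : Δ →₀ ℤ)
  have hL_mem : L (u : Δ →₀ ℤ) ∈ AddSubgroup.closure (Set.range aidElt) := by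
    rw [Finsupp.liftAddHom_apply]
    exact AddSubmonoidClass.finsuppSum_mem _ _ _ fun c _ =>
      AddSubgroup.zsmul_mem _ (AddSubgroup.subset_closure (Set.mem_range_self c)) _
  rwa [hu] at hL_mem

variable (π : Γ₁ →* Δ)

def emodGens : Set (EMod π) :=
  {x | ∃ (k : π.ker) (c : Δ), x = (Additive.ofMul (Abelianization.of k), aidElt c)}

lemma closure_emodGens : AddSubgroup.closure (emodGens π) = ⊤ := by
  rw [eq_top_iff]
  rintro ⟨a, u⟩ -
  obtain ⟨k, hk⟩ : ∃ k, Abelianization.of k = Additive.toMul a := QuotientGroup.mk_surjective _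
  have ha : ((a, 0) : EMod π) ∈ emodGens π := ⟨k, 1, by simp [aidElt_one, hk]⟩
  have hu : AddMonoidHom.inr _ _ u ∈ AddSubgroup.closure (emodGens π) := by
    have : (AddSubgroup.closure (Set.range aidElt)).map (AddMonoidHom.inr _ _) ≤
        AddSubgroup.closure (emodGens π) := by
      rw [AddMonoidHom.map_closure]
      exact AddSubgroup.closure_mono <| by
        rintro _ ⟨_, ⟨c, rfl⟩, rfl⟩
        exact ⟨1, c, by simp⟩
    exact this ⟨u, by simp [closure_range_aidElt], rfl⟩
  simpa using AddSubgroup.add_mem _ (AddSubgroup.subset_closure ha) hu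

variable (M : Type) [AddCommGroup M]

def tmodGens : Set (TMod M π) :=
  {t | ∃ (k : π.ker) (c : Δ) (m : M),
    t = ((Additive.ofMul (Abelianization.of k), aidElt c) : EMod π) ⊗ₜ[ℤ] m}

lemma closure_tmodGens : AddSubgroup.closure (tmodGens π M) = ⊤ := by
  rw [eq_top_iff]
  rintro t -
  induction t using TensorProduct.induction_on with
  | zero => exact zero_mem _
  | add x y hx hy => exact add_mem hx hy
  | tmul e m =>
    let f := ((TensorProduct.mk ℤ (EMod π) M).flip m).toAddMonoidHom
    have : (AddSubgroup.closure (emodGens π)).map f ≤ AddSubgroup.closure (tmodGens π M) := by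
      rw [AddMonoidHom.map_closure]
      exact AddSubgroup.closure_mono <| by
        rintro _ ⟨_, ⟨k, c, rfl⟩, rfl⟩
        exact ⟨k, c, m, rfl⟩
    exact this ⟨e, by simp [closure_emodGens], rfl⟩

end Generators

section Coinvariants

variable {Γ₁ Δ : Type} [Group Γ₁] [Group Δ] (π : Γ₁ →* Δ) [DistribMulAction Δ (EMod π)]
variable (M : Type) [AddCommGroup M] [DistribMulAction Δ M]

lemma diagT_tmul (d : Δ) (e : EMod π) (m : M) :
    diagT M π d (e ⊗ₜ[ℤ] m) = (d • e) ⊗ₜ[ℤ] (d • m) :=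
  TensorProduct.map_tmul _ _ _ _

lemma CoinvT.mk_smul_tmul (d : Δ) (e : EMod π) (m : M) :
    (((d • e) ⊗ₜ[ℤ] m : TMod M π) : CoinvT M π) = ((e ⊗ₜ[ℤ] (d⁻¹ • m) : TMod M π) : _) := by
  have : diagT M π d (e ⊗ₜ[ℤ] (d⁻¹ • m)) - e ⊗ₜ[ℤ] (d⁻¹ • m) ∈ coinvKerT M π :=
    AddSubgroup.subset_closure ⟨d, _, rfl⟩
  rwa [diagT_tmul, smul_inv_smul, ← QuotientAddGroup.eq_iff_sub_mem] at this

lemma CoinvT.range_eq_closure_image_tmodGens {V : Type} [AddCommGroup V]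
    (q : CoinvT M π →+ V) :
    q.range = AddSubgroup.closure (q.comp (QuotientAddGroup.mk' _) '' tmodGens π M) := by
  rw [AddMonoidHom.range_eq_map, ← AddSubgroup.map_top_of_surjective _
    (QuotientAddGroup.mk'_surjective _), ← closure_tmodGens π M, AddSubgroup.map_map,
    AddMonoidHom.map_closure]

end Coinvariants

section CrossedHom

variable {Γ₁ Δ : Type} [Group Γ₁] [Group Δ] (π : Γ₁ →* Δ) (σ : Δ → Γ₁)
variable (hσ : ∀ c, π (σ c) = c)

noncomputable def crossedHomE (g : Γ₁) : EMod π :=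
  (Additive.ofMul (Abelianization.of ⟨g * (σ (π g))⁻¹, by simp [MonoidHom.mem_ker, hσ]⟩),
    aidElt (π g))

lemma crossedHomE_mul [DistribMulAction Δ (EMod π)] (hE : EActionFormula π σ hσ) (g h : Γ₁) :
    crossedHomE π σ hσ (g * h) = crossedHomE π σ hσ g + π g • crossedHomE π σ hσ h := by
  rw [crossedHomE, crossedHomE, crossedHomE, hE, Prod.mk_add_mk]
  refine Prod.ext ?_ (Subtype.ext ?_)
  · simp only [conjAb, kappaE, Abelianization.map_of, ← ofMul_mul, ← map_mul]
    congr 2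
    apply Subtype.ext
    simp only [MulEquiv.toMonoidHom_eq_coe, MonoidHom.coe_coe, MulAut.conjNormal_apply,
      Subgroup.coe_mul, map_mul]
    group
  · simp only [AddSubgroup.coe_add, aidElt, aidElt2, map_mul]
    abel

lemma crossedHomE_of_mem_ker (hσ1 : σ 1 = 1) (k : π.ker) :
    crossedHomE π σ hσ k = (Additive.ofMul (Abelianization.of k), 0) := by
  have hk : π k = 1 := k.2
  simp only [crossedHomE, hk, hσ1, inv_one, mul_one, aidElt_one]

lemma crossedHomE_sigma (c : Δ) : crossedHomE π σ hσ (σ c) = (0, aidElt c) := by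
  simp only [crossedHomE, hσ, mul_inv_cancel]
  rfl

end CrossedHom

section Chains

variable {Γ₁ Δ : Type} [Group Γ₁] [Group Δ] (π : Γ₁ →* Δ)
variable (M : Type) [AddCommGroup M] [DistribMulAction Δ M]

abbrev ChainsModBoundaries : Type := (Γ₁ →₀ M) ⧸ (dTwo M π).range

lemma dTwo_single (g h : Γ₁) (m : M) :
    dTwo M π (Finsupp.single (g, h) m) =
      Finsupp.single h m - Finsupp.single (g * h) m + Finsupp.single g (π h • m) := by
  simp [dTwo]

lemma ChainsModBoundaries.mk_single_mul (g h : Γ₁) (m : M) :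
    (Finsupp.single (g * h) m : ChainsModBoundaries π M) =
      (Finsupp.single h m : ChainsModBoundaries π M) + (Finsupp.single g (π h • m) : _) := by
  have : (dTwo M π (Finsupp.single (g, h) m) : ChainsModBoundaries π M) = 0 :=
    (QuotientAddGroup.eq_zero_iff _).2 ⟨_, rfl⟩
  rw [dTwo_single, QuotientAddGroup.mk_add, QuotientAddGroup.mk_sub] at this
  rw [← sub_eq_zero, ← neg_eq_zero, ← this]
  abel

noncomputable def chainsCocycle : ZOneM M π (ChainsModBoundaries π M) :=
  ⟨fun g => (QuotientAddGroup.mk' _).comp (Finsupp.singleAddHom g⁻¹), fun g h m => by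
    simp only [AddMonoidHom.comp_apply, Finsupp.singleAddHom_apply, QuotientAddGroup.mk'_apply,
      mul_inv_rev, ChainsModBoundaries.mk_single_mul, map_inv]⟩

lemma chainsCocycle_apply (g : Γ₁) (m : M) :
    (chainsCocycle π M).1 g m = (Finsupp.single g⁻¹ m : ChainsModBoundaries π M) := rfl

end Chains

namespace ZOneM

variable {Γ₁ Δ : Type} [Group Γ₁] [Group Δ] {π : Γ₁ →* Δ}
variable {M : Type} [AddCommGroup M] [DistribMulAction Δ M] {V : Type} [AddCommGroup V]
variable (Φ : ZOneM M π V)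

lemma apply_mul (g h : Γ₁) (m : M) : Φ.1 (g * h) m = Φ.1 g m + Φ.1 h ((π g)⁻¹ • m) :=
  Φ.2 g h m

lemma apply_one (m : M) : Φ.1 1 m = 0 := by
  simpa using apply_mul Φ 1 1 m

lemma apply_mul_of_mem_ker {g : Γ₁} (hg : π g = 1) (h : Γ₁) (m : M) :
    Φ.1 (g * h) m = Φ.1 g m + Φ.1 h m := by
  simp [apply_mul Φ, hg]

lemma apply_conj {k : Γ₁} (hk : π k = 1) {x : Γ₁} {d : Δ} (hx : π x = d) (m : M) :
    Φ.1 (x * k * x⁻¹) (d • m) = Φ.1 k m := by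
  subst hx
  have hinv : Φ.1 x (π x • m) + Φ.1 x⁻¹ m = 0 := by
    simpa [apply_one Φ] using (apply_mul Φ x x⁻¹ (π x • m)).symm
  rw [mul_assoc, apply_mul Φ, inv_smul_smul, apply_mul_of_mem_ker Φ hk, add_left_comm, hinv,
    add_zero]

noncomputable def restrictKer : Additive (Abelianization π.ker) →+ (M →+ V) :=
  MonoidHom.toAdditiveLeft <| Abelianization.lift
    { toFun := fun k => Multiplicative.ofAdd (Φ.1 k)
      map_one' := by ext m; exact apply_one Φ m
      map_mul' := fun k l => by ext m; exact apply_mul_of_mem_ker Φ k.2 l m }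

lemma restrictKer_of (k : π.ker) :
    restrictKer Φ (Additive.ofMul (Abelianization.of k)) = Φ.1 k := rfl

variable (σ : Δ → Γ₁)

noncomputable def augIdealHom : augIdeal Δ →+ (M →+ V) :=
  (Finsupp.liftAddHom fun c => zmultiplesHom _ (Φ.1 (σ c))).comp (augIdeal Δ).subtype

lemma augIdealHom_aidElt2 (a b : Δ) :
    augIdealHom Φ σ (aidElt2 a b) = Φ.1 (σ a) - Φ.1 (σ b) := by
  simp only [augIdealHom, aidElt2, AddMonoidHom.comp_apply, AddSubgroup.coe_subtype, map_sub,
    Finsupp.liftAddHom_apply_single, zmultiplesHom_apply, one_zsmul]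

noncomputable def pairing : EMod π →+ (M →+ V) := (restrictKer Φ).coprod (augIdealHom Φ σ)

variable {σ} (hσ : ∀ c, π (σ c) = c)

lemma pairing_of_aidElt (hσ1 : σ 1 = 1) (k : π.ker) (c : Δ) (m : M) :
    pairing Φ σ (Additive.ofMul (Abelianization.of k), aidElt c) m = Φ.1 k m + Φ.1 (σ c) m := by
  simp [pairing, restrictKer_of, show aidElt c = aidElt2 c 1 from rfl, augIdealHom_aidElt2,
    hσ1, apply_one Φ]

lemma pairing_crossedHomE (hσ1 : σ 1 = 1) (g : Γ₁) (m : M) :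
    pairing Φ σ (crossedHomE π σ hσ g) m = Φ.1 g m := by
  have hg : π (g * (σ (π g))⁻¹) = 1 := by simp [hσ]
  rw [crossedHomE, pairing_of_aidElt Φ hσ1, ← apply_mul_of_mem_ker Φ hg, inv_mul_cancel_right]

variable [DistribMulAction Δ (EMod π)]

lemma pairing_smul (hσ1 : σ 1 = 1) (hE : EActionFormula π σ hσ) (d : Δ) (e : EMod π) (m : M) :
    pairing Φ σ (d • e) (d • m) = pairing Φ σ e m := by
  suffices ((pairing Φ σ).flip (d • m)).comp (DistribSMul.toAddMonoidHom (EMod π) d) =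
      (pairing Φ σ).flip m from DFunLike.congr_fun this e
  refine AddMonoidHom.eq_of_eqOn_dense (closure_emodGens π) ?_
  rintro _ ⟨k, c, rfl⟩
  -- the cocycle identity for `κ(d, c) · σ(dc) = σ(d) σ(c)`
  have hκ := apply_mul_of_mem_ker Φ (g := σ d * σ c * (σ (d * c))⁻¹) (by simp [hσ])
    (σ (d * c)) (d • m)
  rw [inv_mul_cancel_right, apply_mul Φ, hσ, inv_smul_smul] at hκ
  simp only [AddMonoidHom.comp_apply, AddMonoidHom.flip_apply, DistribSMul.toAddMonoidHom_apply,
    hE d _ c, pairing_of_aidElt Φ hσ1]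
  simp only [pairing, AddMonoidHom.coprod_apply, ofMul_mul, map_add, AddMonoidHom.add_apply,
    conjAb, Abelianization.map_of, kappaE, restrictKer_of, augIdealHom_aidElt2,
    AddMonoidHom.sub_apply, MulEquiv.toMonoidHom_eq_coe, MonoidHom.coe_coe, MulAut.conjNormal_apply]
  rw [apply_conj Φ k.2 (hσ d)]
  linear_combination (norm := abel) hκ.symm

noncomputable def coinvLift (hσ1 : σ 1 = 1) (hE : EActionFormula π σ hσ) : CoinvT M π →+ V :=
  QuotientAddGroup.lift _ (TensorProduct.liftAddHom (pairing Φ σ) fun r e m => by simp) <|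
    (AddSubgroup.closure_le _).2 <| by
      rintro _ ⟨d, t, rfl⟩
      rw [SetLike.mem_coe, AddMonoidHom.mem_ker, map_sub, sub_eq_zero]
      induction t using TensorProduct.induction_on with
      | zero => simp
      | tmul e m =>
        simp only [diagT_tmul, TensorProduct.liftAddHom_tmul, pairing_smul Φ hσ hσ1 hE]
      | add x y hx hy => simp only [map_add, hx, hy]

lemma coinvLift_mk_crossedHomE (hσ1 : σ 1 = 1) (hE : EActionFormula π σ hσ) (g : Γ₁) (m : M) :
    coinvLift Φ hσ hσ1 hE (QuotientAddGroup.mk (crossedHomE π σ hσ g ⊗ₜ[ℤ] m)) = Φ.1 g m :=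
  pairing_crossedHomE Φ hσ hσ1 g m

end ZOneM

section ChainsEquivCoinv

variable {Γ₁ Δ : Type} [Group Γ₁] [Group Δ] (π : Γ₁ →* Δ) (σ : Δ → Γ₁)
variable (hσ : ∀ c, π (σ c) = c)
variable (M : Type) [AddCommGroup M] [DistribMulAction Δ M] [DistribMulAction Δ (EMod π)]

/-- Inverting `g` matches the convention `q ((g, c - 1) ⊗ m) = c⁻¹ • m - m`: it makes
`q ∘ chainsToCoinv = d₁`. -/
noncomputable def chainsToCoinv : (Γ₁ →₀ M) →+ CoinvT M π :=
  Finsupp.liftAddHom fun g => (QuotientAddGroup.mk' _).comp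
    (TensorProduct.mk ℤ (EMod π) M (crossedHomE π σ hσ g⁻¹)).toAddMonoidHom

lemma chainsToCoinv_single (g : Γ₁) (m : M) :
    chainsToCoinv π σ hσ M (Finsupp.single g m) =
      ((crossedHomE π σ hσ g⁻¹ ⊗ₜ[ℤ] m : TMod M π) : CoinvT M π) := by
  simp [chainsToCoinv]

lemma range_dTwo_le_ker_chainsToCoinv (hE : EActionFormula π σ hσ) :
    (dTwo M π).range ≤ (chainsToCoinv π σ hσ M).ker := by
  rintro _ ⟨x, rfl⟩
  rw [AddMonoidHom.mem_ker]
  induction x using Finsupp.induction_linear with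
  | zero => simp
  | add x y hx hy => rw [map_add, map_add, hx, hy, add_zero]
  | single p m =>
    rw [dTwo_single, map_add, map_sub, chainsToCoinv_single, chainsToCoinv_single,
      chainsToCoinv_single, mul_inv_rev, crossedHomE_mul π σ hσ hE, map_inv,
      TensorProduct.add_tmul, QuotientAddGroup.mk_add, CoinvT.mk_smul_tmul, inv_inv]
    abel

noncomputable def chainsModBoundariesEquivCoinv (hσ1 : σ 1 = 1) (hE : EActionFormula π σ hσ) :
    ChainsModBoundaries π M ≃+ CoinvT M π :=
  AddMonoidHom.toAddEquiv
    (QuotientAddGroup.lift _ _ (range_dTwo_le_ker_chainsToCoinv π σ hσ M hE))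
    (ZOneM.coinvLift (chainsCocycle π M) hσ hσ1 hE)
    (QuotientAddGroup.addMonoidHom_ext _ <| Finsupp.addHom_ext fun g m => by
      simp [chainsToCoinv_single, ZOneM.coinvLift_mk_crossedHomE, chainsCocycle_apply])
    (QuotientAddGroup.addMonoidHom_ext _ <|
      AddMonoidHom.eq_of_eqOn_dense (closure_tmodGens π M) <| by
        rintro _ ⟨k, c, m, rfl⟩
        have hgen : ((Additive.ofMul (Abelianization.of k), aidElt c) : EMod π) =
            crossedHomE π σ hσ k + crossedHomE π σ hσ (σ c) := by
          rw [crossedHomE_of_mem_ker π σ hσ hσ1, crossedHomE_sigma π σ hσ, Prod.mk_add_mk,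
            add_zero, zero_add]
        simp [hgen, TensorProduct.add_tmul, ZOneM.coinvLift_mk_crossedHomE, chainsCocycle_apply,
          chainsToCoinv_single])

lemma chainsModBoundariesEquivCoinv_mk (hσ1 : σ 1 = 1) (hE : EActionFormula π σ hσ)
    (x : Γ₁ →₀ M) :
    chainsModBoundariesEquivCoinv π σ hσ M hσ1 hE x = chainsToCoinv π σ hσ M x := rfl

end ChainsEquivCoinv

theorem QuotientAddGroup.exists_injective_range_eq_ker {C X N : Type*} [AddCommGroup C]
    [AddCommGroup X] [AddCommGroup N] {d : C →+ N} {B : AddSubgroup C} (e : C ⧸ B ≃+ X)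
    (q : X →+ N) (hq : ∀ c : C, q (e c) = d c) :
    ∃ ι : d.ker ⧸ B.addSubgroupOf d.ker →+ X, Function.Injective ι ∧ ι.range = q.ker := by
  let ι₀ := QuotientAddGroup.map (B.addSubgroupOf d.ker) B d.ker.subtype le_rfl
  have hι₀ : Function.Injective ι₀ := by
    refine (injective_iff_map_eq_zero _).2 fun z hz => ?_
    induction z using QuotientAddGroup.induction_on with | H z => ?_
    rw [QuotientAddGroup.eq_zero_iff, AddSubgroup.mem_addSubgroupOf]
    exact (QuotientAddGroup.eq_zero_iff _).1 hz
  refine ⟨e.toAddMonoidHom.comp ι₀, e.injective.comp hι₀, le_antisymm ?_ fun x hx => ?_⟩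
  · rintro _ ⟨z, rfl⟩
    induction z using QuotientAddGroup.induction_on with | H z => ?_
    exact (hq z).trans z.2
  · obtain ⟨c, hc⟩ := QuotientAddGroup.mk_surjective (e.symm x)
    have hdc : c ∈ d.ker := by
      rw [AddMonoidHom.mem_ker, ← hq, hc, e.apply_symm_apply]
      exact hx
    refine ⟨(⟨c, hdc⟩ : d.ker), ?_⟩
    change e (c : C ⧸ B) = x
    rw [hc, e.apply_symm_apply]

section Statement9

variable {Γ₁ Δ : Type} [Group Γ₁] [Group Δ]

theorem statement9_general
    (π : Γ₁ →* Δ)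
    (σ : Δ → Γ₁) (hσ : ∀ c, π (σ c) = c) (hσ1 : σ 1 = 1)
    [DistribMulAction Δ (EMod π)] (hE : EActionFormula π σ hσ)
    (M : Type) [AddCommGroup M] [DistribMulAction Δ M]
    (q : CoinvT M π →+ M)
    (hq : ∀ (g : Abelianization ↥π.ker) (c : Δ) (m : M),
      q (QuotientAddGroup.mk (((Additive.ofMul g, aidElt c) : EMod π) ⊗ₜ[ℤ] m)) =
        c⁻¹ • m - m) :
    -- q is surjective onto I_ΔM ...
    q.range = idealSMulM (Δ := Δ) M
    -- ... and there is an injective map H_1(Γ₁,M) → (𝓔⊗M)_Δ with image ker q: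
    ∧ ∃ ι : HOne M π →+ CoinvT M π,
        Function.Injective ι ∧ ι.range = q.ker := by
  have hq_gens : q.comp (QuotientAddGroup.mk' _) '' tmodGens π M =
      {x | ∃ (c : Δ) (m : M), x = c • m - m} := by
    ext x
    constructor
    · rintro ⟨_, ⟨k, c, m, rfl⟩, rfl⟩
      exact ⟨c⁻¹, m, hq _ c m⟩
    · rintro ⟨c, m, rfl⟩
      refine ⟨_, ⟨1, c⁻¹, m, rfl⟩, ?_⟩
      rw [AddMonoidHom.comp_apply, QuotientAddGroup.mk'_apply, hq, inv_inv]
  have hq_chains (x : Γ₁ →₀ M) :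
      q (chainsModBoundariesEquivCoinv π σ hσ M hσ1 hE x) = dOne M π x := by
    rw [chainsModBoundariesEquivCoinv_mk]
    induction x using Finsupp.induction_linear with
    | zero => simp
    | add x y hx hy => rw [map_add, map_add, map_add, hx, hy]
    | single g m => simp [chainsToCoinv_single, crossedHomE, hq, dOne]
  refine ⟨?_, QuotientAddGroup.exists_injective_range_eq_ker _ q hq_chains⟩
  rw [CoinvT.range_eq_closure_image_tmodGens, hq_gens, idealSMulM]

theorem statement9
    (π : Γ₁ →* Δ) (hπ : Function.Surjective π)
    (σ : Δ → Γ₁) (hσ : ∀ c, π (σ c) = c) (hσ1 : σ 1 = 1)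
    [Fintype Δ]
    [DistribMulAction Δ (EMod π)] (hE : EActionFormula π σ hσ)
    (M : Type) [AddCommGroup M] [DistribMulAction Δ M]
    (q : CoinvT M π →+ M)
    (hq : ∀ (g : Abelianization ↥π.ker) (c : Δ) (m : M),
      q (QuotientAddGroup.mk (((Additive.ofMul g, aidElt c) : EMod π) ⊗ₜ[ℤ] m)) =
        c⁻¹ • m - m) :
    -- q is surjective onto I_ΔM ...
    q.range = idealSMulM (Δ := Δ) M
    -- ... and there is an injective map H_1(Γ₁,M) → (𝓔⊗M)_Δ with image ker q:
    ∧ ∃ ι : HOne M π →+ CoinvT M π,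
        Function.Injective ι ∧ ι.range = q.ker :=
  statement9_general π σ hσ hσ1 hE M q hq

end Statement9
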